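/- For all positive integers $n$ and $n'$: $\sum_{\substack{a,b \ge 0 \\ a+b \le n\wedge n'}} a!\,b!\,\sqrt{(n+n'-a-b)!} \le \frac{2^{3(n+n')}\, n!\, n'!}{\sqrt{(n\vee n' - n\wedge n')!}}$. -/

import Mathlib

open Finset
open scoped Nat

/- Each term satisfies `a! b! √(K!) √(D!) ≤ a! b! K! ≤ (n + n')! ≤ 2^(n+n') n! n'!`, where
`K = n + n' - a - b ≥ D = |n - n'|`, and there are at most `(min n n' + 1)² ≤ 4^(n+n')` terms. -/

theorem Nat.factorial_add_le_two_pow_mul (i j : ℕ) : (i + j)! ≤ 2 ^ (i + j) * (i ! * j !) := by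
  rw [← Nat.add_choose_mul_factorial_mul_factorial, mul_assoc]
  exact Nat.mul_le_mul_right _ (Nat.choose_le_two_pow _ _)

theorem Nat.factorial_mul_factorial_mul_factorial_le (i j k : ℕ) :
    i ! * j ! * k ! ≤ (i + j + k)! :=
  Nat.le_of_dvd (Nat.factorial_pos _) <|
    (mul_dvd_mul_right (Nat.factorial_mul_factorial_dvd_factorial_add i j) _).trans
      (Nat.factorial_mul_factorial_dvd_factorial_add _ _)

theorem Real.sqrt_factorial_mul_sqrt_factorial_le {d k : ℕ} (h : d ≤ k) :
    √(k ! : ℝ) * √(d ! : ℝ) ≤ k ! :=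
  calc √(k ! : ℝ) * √(d ! : ℝ) ≤ √(k ! : ℝ) * √(k ! : ℝ) := by gcongr
    _ = k ! := Real.mul_self_sqrt (by positivity)

theorem Finset.sum_range_sum_range_sub_le {f : ℕ → ℕ → ℝ} {C : ℝ} (m : ℕ) (hC : 0 ≤ C)
    (hf : ∀ a b, a + b ≤ m → f a b ≤ C) :
    ∑ a ∈ range (m + 1), ∑ b ∈ range (m + 1 - a), f a b ≤ (m + 1) ^ 2 * C := by
  have hinner : ∀ a ∈ range (m + 1), ∑ b ∈ range (m + 1 - a), f a b ≤ (m + 1) * C := by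
    intro a _
    calc ∑ b ∈ range (m + 1 - a), f a b ≤ (m + 1 - a : ℕ) * C := by
          simpa using sum_le_card_nsmul (range (m + 1 - a)) (f a) C fun b hb ↦
            hf a b (by have := mem_range.1 hb; omega)
      _ ≤ (m + 1) * C := by
          gcongr
          exact_mod_cast Nat.sub_le _ _
  calc _ ≤ ∑ _a ∈ range (m + 1), ((m + 1) * C : ℝ) := sum_le_sum hinner
    _ = (m + 1) ^ 2 * C := by
        rw [sum_const, card_range, nsmul_eq_mul]
        push_cast
        ring

theorem factorial_mul_factorial_mul_sqrt_factorial_le {n n' a b : ℕ} (hab : a + b ≤ min n n') :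
    (a ! : ℝ) * b ! * √((n + n' - a - b)! : ℝ) * √((max n n' - min n n')! : ℝ) ≤
      2 ^ (n + n') * (n ! * n' !) := by
  set K := n + n' - a - b
  have hDK : max n n' - min n n' ≤ K := by omega
  have hsum : a + b + K = n + n' := by omega
  calc (a ! : ℝ) * b ! * √(K ! : ℝ) * √((max n n' - min n n')! : ℝ)
      ≤ a ! * b ! * K ! := by
        rw [mul_assoc]
        gcongr
        exact Real.sqrt_factorial_mul_sqrt_factorial_le hDK
    _ ≤ 2 ^ (n + n') * (n ! * n' !) := by
        exact_mod_cast (hsum ▸ Nat.factorial_mul_factorial_mul_factorial_le a b K).trans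
          (Nat.factorial_add_le_two_pow_mul n n')

theorem stmt_15_general (n n' : ℕ) :
    ∑ a ∈ Finset.range (min n n' + 1), ∑ b ∈ Finset.range (min n n' + 1 - a),
      (a.factorial : ℝ) * b.factorial * Real.sqrt ((n + n' - a - b).factorial)
    ≤ 2 ^ (3 * (n + n')) * n.factorial * n'.factorial /
        Real.sqrt ((max n n' - min n n').factorial) := by
  rw [le_div_iff₀ (Real.sqrt_pos.2 (by positivity))]
  simp_rw [sum_mul]
  have hcount : min n n' + 1 ≤ 2 ^ (n + n') :=
    (Nat.lt_two_pow_self (n := n + n')).trans_le' (by omega)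
  calc _ ≤ (((min n n' : ℕ) : ℝ) + 1) ^ 2 * (2 ^ (n + n') * (n ! * n' !)) :=
        sum_range_sum_range_sub_le _ (by positivity) fun _ _ hab ↦
          factorial_mul_factorial_mul_sqrt_factorial_le hab
    _ ≤ (2 ^ (n + n')) ^ 2 * (2 ^ (n + n') * (n ! * n' !)) := by
        gcongr
        exact_mod_cast hcount
    _ = 2 ^ (3 * (n + n')) * n ! * n' ! := by ring

theorem stmt_15 (n n' : ℕ) (hn : 1 ≤ n) (hn' : 1 ≤ n') :
    ∑ a ∈ Finset.range (min n n' + 1), ∑ b ∈ Finset.range (min n n' + 1 - a),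
      (a.factorial : ℝ) * b.factorial * Real.sqrt ((n + n' - a - b).factorial)
    ≤ 2 ^ (3 * (n + n')) * n.factorial * n'.factorial /
        Real.sqrt ((max n n' - min n n').factorial) :=
  stmt_15_general n n'
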